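/- arXiv:1904.03503 — 6 statements merged into one kernel-verified Lean document; each statement's English description precedes it below -/
import Mathlib

section
/- Let K be a number field and n ≥ 1 an integer. Let S be a subring of the matrix ring M_n(K) such that S is commutative and every nonzero element of S has a multiplicative inverse lying in S (i.e. S is a field), and such that the dimension of S as a ℚ-vector space equals n·[K:ℚ]. Then S is equal to its own centralizer in M_n(K); in particular, every scalar matrix k·1 with k ∈ K belongs to S. -/
/-! Since `S` is a field with `dim_ℚ S = dim_ℚ Kⁿ`, the column space `Kⁿ` is one-dimensional
over `S`, so it has a cyclic vector `v`. If `c` commutes with `S`, pick `t ∈ S` with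
`t v = c v`; then `c (s v) = s t v = t (s v)` for all `s ∈ S`, hence `c = t ∈ S`. -/

open Module

theorem Subalgebra.isField_of_forall_exists_mul_eq_one {R A : Type*} [CommSemiring R]
    [Semiring A] [Algebra R A] [Nontrivial A] (S : Subalgebra R A)
    (hcomm : ∀ a ∈ S, ∀ b ∈ S, a * b = b * a) (hinv : ∀ a ∈ S, a ≠ 0 → ∃ b ∈ S, a * b = 1) :
    IsField S where
  exists_pair_ne := ⟨0, 1, zero_ne_one⟩
  mul_comm a b := Subtype.ext (hcomm a a.2 b b.2)
  mul_inv_cancel {a} ha := by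
    obtain ⟨b, hb, hab⟩ := hinv a a.2 fun h => ha (Subtype.ext h)
    exact ⟨⟨b, hb⟩, Subtype.ext hab⟩

theorem Module.finrank_eq_one_of_finrank_eq {F E V : Type*} [Field F] [Field E] [Algebra F E]
    [AddCommGroup V] [Module F V] [Module E V] [IsScalarTower F E V]
    [FiniteDimensional F E] [FiniteDimensional F V] (h : finrank F E = finrank F V) :
    finrank E V = 1 := by
  have : Module.Finite E V := .of_restrictScalars_finite F E V
  refine Nat.eq_of_mul_eq_mul_left (finrank_pos (R := F) (M := E)) ?_
  rw [finrank_mul_finrank, mul_one, h]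

namespace Matrix

variable {m K : Type*} [Fintype m]

theorem mem_of_commute_of_cyclic [Semiring K] {S : Set (Matrix m m K)}
    (hS : ∀ a ∈ S, ∀ b ∈ S, Commute a b) {v : m → K} (hv : ∀ w, ∃ s ∈ S, s *ᵥ v = w)
    {c : Matrix m m K} (hc : ∀ s ∈ S, Commute s c) : c ∈ S := by
  obtain ⟨t, ht, htv⟩ := hv (c *ᵥ v)
  suffices c = t from this ▸ ht
  refine ext_iff_mulVec.2 fun w => ?_
  obtain ⟨s, hs, rfl⟩ := hv w
  calc c *ᵥ s *ᵥ v = s *ᵥ c *ᵥ v := by rw [mulVec_mulVec, mulVec_mulVec, (hc s hs).eq]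
    _ = s *ᵥ t *ᵥ v := by rw [htv]
    _ = t *ᵥ s *ᵥ v := by rw [mulVec_mulVec, mulVec_mulVec, (hS s hs t ht).eq]

variable [DecidableEq m]

instance {R : Type*} [CommSemiring R] [Semiring K] [Algebra R K]
    (S : Subalgebra R (Matrix m m K)) : Module S (m → K) where
  smul s w := (s : Matrix m m K) *ᵥ w
  one_smul := one_mulVec
  mul_smul s t w := (mulVec_mulVec w (s : Matrix m m K) t).symm
  smul_zero _ := mulVec_zero _
  smul_add _ := mulVec_add _
  add_smul _ _ w := add_mulVec _ _ w
  zero_smul := zero_mulVec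

theorem subalgebra_smul_eq_mulVec {R : Type*} [CommSemiring R] [Semiring K] [Algebra R K]
    {S : Subalgebra R (Matrix m m K)} (s : S) (w : m → K) : s • w = (s : Matrix m m K) *ᵥ w :=
  rfl

instance {R : Type*} [CommSemiring R] [CommSemiring K] [Algebra R K]
    (S : Subalgebra R (Matrix m m K)) : IsScalarTower R S (m → K) where
  smul_assoc r s w := by
    simp only [subalgebra_smul_eq_mulVec, Subalgebra.coe_smul, smul_mulVec]

theorem exists_cyclic_vector_of_finrank_eq {F : Type*} [Field F] [Field K] [Algebra F K]
    [FiniteDimensional F K] (S : Subalgebra F (Matrix m m K)) (hS : IsField S)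
    (h : finrank F S = finrank F (m → K)) : ∃ v : m → K, ∀ w, ∃ s ∈ S, s *ᵥ v = w := by
  let : Field S := hS.toField
  have : Free S (m → K) := .of_divisionRing S _
  obtain ⟨v, -, hv⟩ := finrank_eq_one_iff'.1 (finrank_eq_one_of_finrank_eq h)
  exact ⟨v, fun w => let ⟨s, hs⟩ := hv w; ⟨s, s.2, hs⟩⟩

end Matrix

/-- Let `K` be a number field and `n ≥ 1`. Let `S` be a subring of the
matrix ring `Mₙ(K)` which is a `ℚ`-subspace (automatic for a subring that is a field,
so we take it to be a `ℚ`-subalgebra), commutative, in which every nonzero element has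
a multiplicative inverse lying in `S`, and whose dimension as a `ℚ`-vector space equals
`n·[K:ℚ]`. Then `S` equals its own centralizer in `Mₙ(K)`; in particular every scalar
matrix `k·1` with `k ∈ K` belongs to `S`. -/
theorem subfield_of_matrix_ring_is_self_centralizing
    (K : Type*) [Field K] [NumberField K] (n : ℕ) (hn : 1 ≤ n)
    (S : Subalgebra ℚ (Matrix (Fin n) (Fin n) K))
    (hcomm : ∀ a ∈ S, ∀ b ∈ S, a * b = b * a)
    (hinv : ∀ a ∈ S, a ≠ 0 → ∃ b ∈ S, a * b = 1)
    (hdim : Module.finrank ℚ S = n * Module.finrank ℚ K) :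
    Subalgebra.centralizer ℚ (S : Set (Matrix (Fin n) (Fin n) K)) = S ∧
      ∀ k : K, Matrix.scalar (Fin n) k ∈ S := by
  have : Nonempty (Fin n) := ⟨⟨0, hn⟩⟩
  have hS : IsField S := S.isField_of_forall_exists_mul_eq_one hcomm hinv
  have hdimV : finrank ℚ S = finrank ℚ (Fin n → K) := by
    rw [hdim, finrank_pi_fintype]; simp
  obtain ⟨v, hv⟩ := Matrix.exists_cyclic_vector_of_finrank_eq S hS hdimV
  have hcent : Subalgebra.centralizer ℚ (S : Set (Matrix (Fin n) (Fin n) K)) = S :=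
    le_antisymm (fun c hc => Matrix.mem_of_commute_of_cyclic hcomm hv hc)
      fun a ha => (Subalgebra.mem_centralizer_iff ℚ).2 fun g hg => hcomm g hg a ha
  refine ⟨hcent, fun k => hcent ▸ (Subalgebra.mem_centralizer_iff ℚ).2 fun g _ => ?_⟩
  exact (Matrix.scalar_commute k (mul_comm k) g).symm
end

section
/- Let L be a number field, Γ an order of L, K ⊆ L a subfield with ring of integers O_K, n = [L:K], and R = M_n(O_K). Then for every unital ring homomorphism ρ: Γ → R there exists a unique ring homomorphism φ: K → L such that ρ is φ-compatible. -/
/-!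
Since `Γ` spans `L` over `ℚ`, `L` is the localisation of `Γ` at the nonzero integers, so `ρ`
extends uniquely to a ring homomorphism `σ : L → Mₙ(K)`. As `L` is a field, `x ↦ σ(x) v` is
injective for any `v ≠ 0`, and `dim_ℚ L = n · dim_ℚ K = dim_ℚ Kⁿ` makes it bijective. Then `Kⁿ`
is cyclic over the commutative ring `σ(L)`, so `σ(L)` is its own centraliser and contains the
scalars; `φ` is `σ⁻¹` on the scalars, and it is unique because `σ` is injective.
-/

open NumberField

/-- A ring homomorphism `ρ : Γ → Mₙ(O_K)` is `φ`-compatible for a ring homomorphism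
`φ : K → L` if there is a `ℚ`-algebra homomorphism `σ : L → Mₙ(K)` with `σ(γ) = ρ(γ)`
for all `γ ∈ Γ` and `σ(φ(k))` equal to the scalar matrix `k·1` for all `k ∈ K`. -/
def IsCompatible (L K : Type*) [Field L] [NumberField L] [Field K] [NumberField K]
    (n : ℕ) (Γ : Subring L) (φ : K →+* L)
    (ρ : Γ →+* Matrix (Fin n) (Fin n) (𝓞 K)) : Prop :=
  ∃ σ : L →ₐ[ℚ] Matrix (Fin n) (Fin n) K,
    (∀ γ : Γ, σ (γ : L) = (ρ γ).map (algebraMap (𝓞 K) K)) ∧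
    ∀ k : K, σ (φ k) = Matrix.scalar (Fin n) k

open Matrix Module

theorem isUnit_intCast_of_ne_zero {A : Type*} [Ring A] [Algebra ℚ A] {m : ℤ} (hm : m ≠ 0) :
    IsUnit (m : A) := by
  simpa using (Ne.isUnit (Int.cast_ne_zero.mpr hm : (m : ℚ) ≠ 0)).map (algebraMap ℚ A)

namespace Subring

variable {L : Type*} [CommRing L] [Algebra ℚ L] {Γ : Subring L}

theorem exists_zsmul_mem_of_span_rat_eq_top (hΓ : Submodule.span ℚ (Γ : Set L) = ⊤) (x : L) :
    ∃ m : ℤ, m ≠ 0 ∧ m • x ∈ Γ := by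
  obtain ⟨y, hy, m, rfl⟩ := (IsLocalization.mem_span_iff (nonZeroDivisors ℤ)).mp
    (hΓ ▸ Submodule.mem_top : x ∈ Submodule.span ℚ (Γ : Set L))
  have hm : (m : ℚ) ≠ 0 := by exact_mod_cast nonZeroDivisors.coe_ne_zero m
  refine ⟨m, nonZeroDivisors.coe_ne_zero m, ?_⟩
  rw [IsFractionRing.mk'_eq_div, ← Int.cast_smul_eq_zsmul ℚ, smul_smul, map_one, algebraMap_int_eq,
    eq_intCast, mul_one_div_cancel hm, one_smul]
  exact (Submodule.span_le (p := Γ.toAddSubgroup.toIntSubmodule)).mpr le_rfl hy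

theorem isLocalization_of_span_rat_eq_top (hΓ : Submodule.span ℚ (Γ : Set L) = ⊤) :
    IsLocalization ((nonZeroDivisors ℤ).map (Int.castRingHom Γ)) L where
  map_units := by
    rintro ⟨_, m, hm, rfl⟩
    simpa using isUnit_intCast_of_ne_zero (A := L) (nonZeroDivisors.coe_ne_zero ⟨m, hm⟩)
  surj x := by
    obtain ⟨m, hm, hmx⟩ := exists_zsmul_mem_of_span_rat_eq_top hΓ x
    refine ⟨(⟨m • x, hmx⟩, ⟨m, m, mem_nonZeroDivisors_of_ne_zero hm, rfl⟩), ?_⟩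
    change x * (m : L) = m • x
    rw [zsmul_eq_mul, mul_comm]
  exists_of_eq h := ⟨1, by simpa using Subtype.val_injective h⟩

open scoped IsMulCommutative in
theorem exists_ringHom_extend_of_span_rat_eq_top {A : Type*} [Ring A] [Algebra ℚ A]
    (hΓ : Submodule.span ℚ (Γ : Set L) = ⊤) (f : Γ →+* A) :
    ∃ F : L →+* A, ∀ γ : Γ, F γ = f γ := by
  let B := Algebra.adjoin ℚ (Set.range f)
  have : IsMulCommutative B := Algebra.isMulCommutative_adjoin ℚ <| by
    rintro _ ⟨x, rfl⟩ _ ⟨y, rfl⟩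
    rw [← map_mul, mul_comm, map_mul]
  have := isLocalization_of_span_rat_eq_top hΓ
  let f' : Γ →+* B := f.codRestrict B fun γ => Algebra.subset_adjoin ⟨γ, rfl⟩
  have hunits : ∀ s : (nonZeroDivisors ℤ).map (Int.castRingHom Γ), IsUnit (f' s) := by
    rintro ⟨_, m, hm, rfl⟩
    simpa using isUnit_intCast_of_ne_zero (A := B) (nonZeroDivisors.coe_ne_zero ⟨m, hm⟩)
  refine ⟨B.val.toRingHom.comp (IsLocalization.lift (S := L) (P := B) hunits), fun γ => ?_⟩
  exact congrArg Subtype.val (IsLocalization.lift_eq (S := L) hunits γ)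

end Subring

theorem RingHom.exists_eq_of_forall_commute_of_surjective_mulVec {R K ι : Type*} [CommRing R]
    [CommRing K] [Fintype ι] [DecidableEq ι] (f : R →+* Matrix ι ι K) {v : ι → K}
    (hv : Function.Surjective fun x => f x *ᵥ v) {M : Matrix ι ι K}
    (hM : ∀ y, Commute M (f y)) : ∃ x, f x = M := by
  obtain ⟨x, hx⟩ := hv (M *ᵥ v)
  refine ⟨x, ext_iff_mulVec.mpr fun w => ?_⟩
  obtain ⟨y, rfl⟩ := hv w
  calc f x *ᵥ f y *ᵥ v = f y *ᵥ f x *ᵥ v := by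
        rw [mulVec_mulVec, mulVec_mulVec, ← map_mul, mul_comm, map_mul]
    _ = M *ᵥ f y *ᵥ v := by
        dsimp only at hx
        rw [hx, mulVec_mulVec, mulVec_mulVec, (hM y).eq]

theorem AlgHom.surjective_mulVec_of_finrank_eq {k L K ι : Type*} [Field k] [Field L] [Field K]
    [Algebra k L] [Algebra k K] [FiniteDimensional k K] [Fintype ι] [DecidableEq ι]
    (F : L →ₐ[k] Matrix ι ι K)
    (hdim : finrank k L = Fintype.card ι * finrank k K) {v : ι → K} (hv : v ≠ 0) :
    Function.Surjective fun x => F x *ᵥ v := by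
  obtain ⟨i, -⟩ := Function.ne_iff.mp hv
  have : Nonempty ι := ⟨i⟩
  have : FiniteDimensional k L :=
    Module.finite_of_finrank_pos (hdim ▸ Nat.mul_pos Fintype.card_pos finrank_pos)
  let μ : L →ₗ[k] ι → K :=
    { toFun x := F x *ᵥ v
      map_add' x y := by simp only [map_add, add_mulVec]
      map_smul' c x := by simp only [map_smul, smul_mulVec, RingHom.id_apply] }
  have hinj : Function.Injective μ := by
    refine (injective_iff_map_eq_zero μ).mpr fun x hx => ?_
    by_contra hx0
    exact hv <| mulVec_injective_iff_isUnit.mpr ((Ne.isUnit hx0).map F) <|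
      hx.trans (mulVec_zero _).symm
  refine (LinearMap.injective_iff_surjective_of_finrank_eq_finrank ?_).mp hinj
  rw [hdim, finrank_pi_fintype, Finset.sum_const, Finset.card_univ, smul_eq_mul]

theorem RingHom.exists_comp_eq_of_forall_mem_range {R S T : Type*} [Ring R] [Ring S] [Ring T]
    {f : R →+* S} (hf : Function.Injective f) (g : T →+* S) (hg : ∀ t, g t ∈ f.range) :
    ∃ h : T →+* R, f.comp h = g := by
  let e := RingEquiv.ofLeftInverse (Function.leftInverse_invFun hf)
  refine ⟨(e.symm : f.range →+* R).comp (g.codRestrict f.range hg), RingHom.ext fun t => ?_⟩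
  exact congrArg Subtype.val (e.apply_symm_apply ⟨g t, hg t⟩)

theorem existsUnique_compatible_ringHom_general
    (L K : Type*) [Field L] [NumberField L] [Field K] [NumberField K] [Algebra K L]
    (Γ : Subring L)
    (hΓspan : Submodule.span ℚ (Γ : Set L) = ⊤)
    (n : ℕ) (hn : n = Module.finrank K L)
    (ρ : Γ →+* Matrix (Fin n) (Fin n) (𝓞 K)) :
    ∃! φ : K →+* L, IsCompatible L K n Γ φ ρ := by
  classical
  obtain ⟨F, hF⟩ := Γ.exists_ringHom_extend_of_span_rat_eq_top hΓspan
    ((algebraMap (𝓞 K) K).mapMatrix.comp ρ)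
  let σ := F.toRatAlgHom
  have hσΓ : ∀ γ : Γ, σ γ = (ρ γ).map (algebraMap (𝓞 K) K) := hF
  have : Nonempty (Fin n) := ⟨⟨0, hn ▸ finrank_pos⟩⟩
  have hdim : finrank ℚ L = Fintype.card (Fin n) * finrank ℚ K := by
    rw [Fintype.card_fin, hn, mul_comm, finrank_mul_finrank]
  have hcyclic : Function.Surjective fun x => σ x *ᵥ 1 :=
    σ.surjective_mulVec_of_finrank_eq hdim one_ne_zero
  obtain ⟨φ, hφ⟩ :=
    RingHom.exists_comp_eq_of_forall_mem_range σ.toRingHom.injective (scalar (Fin n)) fun k =>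
      σ.toRingHom.exists_eq_of_forall_commute_of_surjective_mulVec hcyclic
        fun _ => scalar_commute k (fun _ => Commute.all _ _) _
  refine ⟨φ, ⟨σ, hσΓ, RingHom.congr_fun hφ⟩, ?_⟩
  rintro φ' ⟨σ', hσ'Γ, hσ'φ'⟩
  have hσ' : σ' = σ := AlgHom.toLinearMap_injective <| LinearMap.ext_on hΓspan
    fun x hx => (hσ'Γ ⟨x, hx⟩).trans (hσΓ ⟨x, hx⟩).symm
  rw [hσ'] at hσ'φ'
  exact RingHom.ext fun k =>
    σ.toRingHom.injective ((hσ'φ' k).trans (RingHom.congr_fun hφ k).symm)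

/-- Let `L` be a number field, `Γ` an order of `L` (a subring which is
finitely generated as a `ℤ`-module and spans `L` over `ℚ`), `K ⊆ L` a subfield with ring
of integers `O_K`, `n = [L:K]`, and `R = Mₙ(O_K)`. Then every unital ring homomorphism
`ρ : Γ → R` is `φ`-compatible for a unique ring homomorphism `φ : K → L`. -/
theorem existsUnique_compatible_ringHom
    (L K : Type*) [Field L] [NumberField L] [Field K] [NumberField K] [Algebra K L]
    (Γ : Subring L) (hΓfin : Module.Finite ℤ Γ)
    (hΓspan : Submodule.span ℚ (Γ : Set L) = ⊤)
    (n : ℕ) (hn : n = Module.finrank K L)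
    (ρ : Γ →+* Matrix (Fin n) (Fin n) (𝓞 K)) :
    ∃! φ : K →+* L, IsCompatible L K n Γ φ ρ :=
  existsUnique_compatible_ringHom_general L K Γ hΓspan n hn ρ
end

section
/- Let L be a number field, Γ an order of L, K ⊆ L a subfield with ring of integers O_K, n = [L:K], and R = M_n(O_K). Fix a ring homomorphism φ: K → L. Then there exists an injective map from the set of φ-compatible ring homomorphisms Γ → R modulo conjugation by units of R into the set C_Γ of equivalence classes of fractional ideals of Γ. (Conjugation by a unit of R preserves φ-compatibility, so this quotient is well defined.) -/
/-!
A compatible `ρ` extends to `σ : L → Mₙ(K)`, and the column map `c_σ : y ↦ σ(y) e_j` is an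
injective `ℚ`-linear map `L → Kⁿ` between spaces of the same dimension, hence bijective, with
`c_σ(y z) = σ(y) c_σ(z)`. The class of `ρ` goes to the class of `I_ρ = c_σ⁻¹(O_Kⁿ)`, a fractional
ideal of `Γ` because `σ(Γ) ⊆ Mₙ(O_K)`. Conjugating `ρ` by `u ∈ GLₙ(O_K)` conjugates `σ` (both
agree on `Γ`, which spans `L`), and that multiplies `I_ρ` by the `x` with `c_σ(x) = u⁻¹ e_j`.
Conversely, if `I_ρ' = x I_ρ`, then `c_σ ∘ (x ·) ∘ c_σ'⁻¹` is `K`-linear (as `σ(φ k)` is scalar),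
maps `O_Kⁿ` onto itself and intertwines `σ'` with `σ`, so its matrix lies in `GLₙ(O_K)` and
conjugates `ρ` into `ρ'`.
-/

open NumberField

/-- Two unital ring homomorphisms `A → B` are conjugate if they differ by conjugation
by a unit of `B`. -/
def ConjRel (A B : Type*) [Ring A] [Ring B] (ρ ρ' : A →+* B) : Prop :=
  ∃ u : Bˣ, ∀ a : A, ρ' a = ↑u * ρ a * ↑u⁻¹

/-- The fractional ideals of a subring `Γ` of a field `L`: the nonzero finitely
generated `Γ`-submodules of `L`. -/
def FractionalIdealOf (L : Type*) [Field L] (Γ : Subring L) : Type _ :=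
  {I : Submodule Γ L // I ≠ ⊥ ∧ I.FG}

/-- Two fractional ideals `I, I'` of `Γ` are equivalent if `I' = x·I` for some
nonzero `x ∈ L`.  `C_Γ` is the `Quot` of this relation. -/
def FracIdealRel (L : Type*) [Field L] (Γ : Subring L)
    (I I' : FractionalIdealOf L Γ) : Prop :=
  ∃ x : L, x ≠ 0 ∧ ∀ y : L, y ∈ I'.1 ↔ ∃ z ∈ I.1, y = x * z


open Matrix

section ColumnMap

variable {L K ι : Type*} [Field L] [CharZero L] [Field K] [CharZero K] [Fintype ι] [DecidableEq ι]

def colMap (σ : L →ₐ[ℚ] Matrix ι ι K) (j : ι) : L →ₗ[ℚ] ι → K where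
  toFun y i := σ y i j
  map_add' y z := by ext; simp
  map_smul' q y := by ext; simp

variable (σ : L →ₐ[ℚ] Matrix ι ι K) (j : ι)

lemma colMap_eq_mulVec (y : L) : colMap σ j y = σ y *ᵥ Pi.single j 1 := by
  ext; simp [colMap]

lemma colMap_mul (y z : L) : colMap σ j (y * z) = σ y *ᵥ colMap σ j z := by
  simp only [colMap_eq_mulVec, map_mul, mulVec_mulVec]

lemma colMap_one : colMap σ j 1 = Pi.single j 1 := by
  rw [colMap_eq_mulVec, map_one, one_mulVec]

lemma colMap_injective : Function.Injective (colMap σ j) := by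
  refine (injective_iff_map_eq_zero _).2 fun y hy => by_contra fun hy0 => ?_
  have h := colMap_mul σ j y⁻¹ y
  rw [inv_mul_cancel₀ hy0, colMap_one, hy, mulVec_zero] at h
  simpa using congrFun h j

lemma colMap_bijective [FiniteDimensional ℚ L] [FiniteDimensional ℚ K]
    (h : Module.finrank ℚ L = Fintype.card ι * Module.finrank ℚ K) :
    Function.Bijective (colMap σ j) := by
  have hdim : Module.finrank ℚ L = Module.finrank ℚ (ι → K) := by
    simp [h, Module.finrank_pi_fintype]
  exact ⟨colMap_injective σ j,
    (LinearMap.injective_iff_surjective_of_finrank_eq_finrank hdim).1 (colMap_injective σ j)⟩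

lemma colMap_mul_left_of_eq_scalar {φ : K →+* L} (hσφ : ∀ k, σ (φ k) = scalar ι k) (k : K)
    (y : L) : colMap σ j (φ k * y) = k • colMap σ j y := by
  simp [colMap_mul, hσφ]

end ColumnMap

section IntegralVectors

variable (R K ι : Type*) [CommRing R] [Field K] [Algebra R K]

def integralVectors : Submodule ℤ (ι → K) :=
  LinearMap.range (LinearMap.compLeft ((Algebra.linearMap R K).restrictScalars ℤ) ι)

variable {R K ι}

lemma integralVectors_fg [Finite ι] [Module.Finite ℤ R] : (integralVectors R K ι).FG := by
  rw [integralVectors, LinearMap.range_eq_map]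
  exact (Module.finite_def.1 inferInstance).map _

lemma single_one_mem_integralVectors [DecidableEq ι] (j : ι) :
    (Pi.single j 1 : ι → K) ∈ integralVectors R K ι :=
  ⟨Pi.single j 1, by ext i; simp [Pi.single_apply]⟩

variable [Fintype ι]

lemma map_mulVec_mem_integralVectors (A : Matrix ι ι R) {w : ι → K}
    (hw : w ∈ integralVectors R K ι) : A.map (algebraMap R K) *ᵥ w ∈ integralVectors R K ι := by
  obtain ⟨v, rfl⟩ := hw
  exact ⟨A *ᵥ v, funext fun i => RingHom.map_mulVec _ _ _ i⟩

variable [DecidableEq ι]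

lemma map_units_mul_inv {S : Type*} [CommRing S] (f : R →+* S) (u : (Matrix ι ι R)ˣ) :
    (u : Matrix ι ι R).map f * (↑u⁻¹ : Matrix ι ι R).map f = 1 := by
  rw [← Matrix.map_mul, u.mul_inv, Matrix.map_one _ (map_zero f) (map_one f)]

lemma map_units_inv_mul {S : Type*} [CommRing S] (f : R →+* S) (u : (Matrix ι ι R)ˣ) :
    (↑u⁻¹ : Matrix ι ι R).map f * (u : Matrix ι ι R).map f = 1 := by
  rw [← Matrix.map_mul, u.inv_mul, Matrix.map_one _ (map_zero f) (map_one f)]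

lemma map_mulVec_mem_integralVectors_iff (u : (Matrix ι ι R)ˣ) {w : ι → K} :
    (u : Matrix ι ι R).map (algebraMap R K) *ᵥ w ∈ integralVectors R K ι ↔
      w ∈ integralVectors R K ι := by
  refine ⟨fun h => ?_, map_mulVec_mem_integralVectors _⟩
  have := map_mulVec_mem_integralVectors (↑u⁻¹ : Matrix ι ι R) h
  rwa [mulVec_mulVec, map_units_inv_mul, one_mulVec] at this

lemma exists_map_eq_of_mulVec_mem {U : Matrix ι ι K}
    (hU : ∀ w ∈ integralVectors R K ι, U *ᵥ w ∈ integralVectors R K ι) :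
    ∃ A : Matrix ι ι R, A.map (algebraMap R K) = U := by
  choose v hv using fun j => hU _ (single_one_mem_integralVectors (R := R) j)
  refine ⟨(Matrix.of v)ᵀ, ext fun i j => ?_⟩
  simpa [mulVec_single_one] using congrFun (hv j) i

lemma exists_units_map_eq_toMatrix' (hR : Function.Injective (algebraMap R K))
    (t : (ι → K) ≃ₗ[K] (ι → K))
    (ht : ∀ w, t w ∈ integralVectors R K ι ↔ w ∈ integralVectors R K ι) :
    ∃ u : (Matrix ι ι R)ˣ,
      (u : Matrix ι ι R).map (algebraMap R K) = LinearMap.toMatrix' t.toLinearMap := by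
  obtain ⟨A, hA⟩ := exists_map_eq_of_mulVec_mem (R := R)
    (U := LinearMap.toMatrix' t.toLinearMap) fun w hw => by simpa [ht] using hw
  obtain ⟨B, hB⟩ := exists_map_eq_of_mulVec_mem (R := R)
    (U := LinearMap.toMatrix' t.symm.toLinearMap) fun w hw => by
      rw [LinearMap.toMatrix'_mulVec, ← ht]; simpa using hw
  have hAB : A * B = 1 := Matrix.map_injective hR <| by
    dsimp only
    rw [Matrix.map_mul, hA, hB, ← LinearMap.toMatrix'_comp, t.comp_symm,
      LinearMap.toMatrix'_id, Matrix.map_one _ (map_zero _) (map_one _)]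
  exact ⟨⟨A, B, hAB, mul_eq_one_comm.1 hAB⟩, hA⟩

end IntegralVectors

section Lattice

variable {L K R ι : Type*} [Field L] [CharZero L] [Field K] [CharZero K] [CommRing R]
  [Algebra R K] [Fintype ι] [DecidableEq ι]

variable (R) in
def latticeOf (σ : L →ₐ[ℚ] Matrix ι ι K) (j : ι) : Submodule ℤ L :=
  (integralVectors R K ι).comap ((colMap σ j).restrictScalars ℤ)

variable (σ : L →ₐ[ℚ] Matrix ι ι K) (j : ι)

lemma mem_latticeOf {y : L} : y ∈ latticeOf R σ j ↔ colMap σ j y ∈ integralVectors R K ι :=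
  Iff.rfl

lemma one_mem_latticeOf : (1 : L) ∈ latticeOf R σ j := by
  rw [mem_latticeOf, colMap_one]
  exact single_one_mem_integralVectors j

lemma latticeOf_fg [Module.Finite ℤ R] : (latticeOf R σ j).FG :=
  Submodule.fg_of_fg_map_injective ((colMap σ j).restrictScalars ℤ) (colMap_injective σ j)
    (integralVectors_fg.of_le (Submodule.map_comap_le _ _))

variable (R) in
def latticeIdeal (Γ : Subring L)
    (hσ : ∀ γ : Γ, ∃ A : Matrix ι ι R, A.map (algebraMap R K) = σ γ) : Submodule Γ L where
  __ := latticeOf R σ j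
  smul_mem' γ y hy := by
    obtain ⟨A, hA⟩ := hσ γ
    change colMap σ j (γ * y) ∈ integralVectors R K ι
    rw [colMap_mul, ← hA]
    exact map_mulVec_mem_integralVectors A hy

variable (R) in
def latticeFracIdeal [Module.Finite ℤ R] (Γ : Subring L)
    (hσ : ∀ γ : Γ, ∃ A : Matrix ι ι R, A.map (algebraMap R K) = σ γ) : FractionalIdealOf L Γ :=
  ⟨latticeIdeal R σ j Γ hσ,
    (Submodule.ne_bot_iff _).2 ⟨1, one_mem_latticeOf σ j, one_ne_zero⟩,
    Submodule.FG.of_restrictScalars ℤ (latticeOf_fg σ j)⟩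

end Lattice

section Conjugacy

variable {L K R ι : Type*} [Field L] [CharZero L] [Field K] [CharZero K] [CommRing R]
  [Algebra R K] [Fintype ι] [DecidableEq ι] {σ σ' : L →ₐ[ℚ] Matrix ι ι K} {j : ι}

lemma exists_mem_latticeOf_iff_of_eq_conj (hσ : Function.Surjective (colMap σ j))
    (u : (Matrix ι ι R)ˣ)
    (hσ' : ∀ y, σ' y = (u : Matrix ι ι R).map (algebraMap R K) * σ y *
      (↑u⁻¹ : Matrix ι ι R).map (algebraMap R K)) :
    ∃ x ≠ 0, ∀ y, y ∈ latticeOf R σ' j ↔ x * y ∈ latticeOf R σ j := by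
  obtain ⟨x, hx⟩ := hσ ((↑u⁻¹ : Matrix ι ι R).map (algebraMap R K) *ᵥ Pi.single j 1)
  have hcol : ∀ y, colMap σ' j y =
      (u : Matrix ι ι R).map (algebraMap R K) *ᵥ colMap σ j (x * y) := fun y => by
    rw [colMap_eq_mulVec, hσ', ← mulVec_mulVec, ← mulVec_mulVec, ← hx, ← colMap_mul, mul_comm]
  refine ⟨x, ?_, fun y => by
    rw [mem_latticeOf, mem_latticeOf, hcol, map_mulVec_mem_integralVectors_iff]⟩
  rintro rfl
  have h := congrArg ((u : Matrix ι ι R).map (algebraMap R K) *ᵥ ·) hx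
  simp only [map_zero, mulVec_zero, mulVec_mulVec, map_units_mul_inv, one_mulVec] at h
  simpa using congrFun h j

lemma exists_conj_of_mem_latticeOf_iff (hR : Function.Injective (algebraMap R K)) {φ : K →+* L}
    (hσφ : ∀ k, σ (φ k) = scalar ι k) (hσ'φ : ∀ k, σ' (φ k) = scalar ι k)
    (hσ : Function.Bijective (colMap σ j)) (hσ' : Function.Bijective (colMap σ' j))
    {x : L} (hx : x ≠ 0) (hI : ∀ y, y ∈ latticeOf R σ' j ↔ x * y ∈ latticeOf R σ j) :
    ∃ u : (Matrix ι ι R)ˣ, ∀ y, (u : Matrix ι ι R).map (algebraMap R K) * σ' y =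
      σ y * (u : Matrix ι ι R).map (algebraMap R K) := by
  set e := LinearEquiv.ofBijective (colMap σ' j) hσ'
  have he : ∀ w, colMap σ' j (e.symm w) = w := e.apply_symm_apply
  have he_mul : ∀ y w, e.symm (σ' y *ᵥ w) = y * e.symm w := fun y w =>
    e.symm_apply_eq.2 (by rw [LinearEquiv.ofBijective_apply, colMap_mul, he])
  have he_smul : ∀ (k : K) w, e.symm (k • w) = φ k * e.symm w := fun k w => by
    rw [← he_mul, hσ'φ]
    congr 1
    ext i
    simp
  let t : (ι → K) →ₗ[K] (ι → K) :=
    { toFun w := colMap σ j (x * e.symm w)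
      map_add' v w := by simp [mul_add]
      map_smul' k w := by
        simp only [he_smul, mul_left_comm x, colMap_mul_left_of_eq_scalar σ j hσφ,
          RingHom.id_apply] }
  have ht : Function.Bijective t := hσ.comp ((mulLeft_bijective₀ x hx).comp e.symm.bijective)
  obtain ⟨u, hu⟩ := exists_units_map_eq_toMatrix' hR (LinearEquiv.ofBijective t ht) fun w => by
    rw [LinearEquiv.ofBijective_apply, LinearMap.coe_mk, AddHom.coe_mk, ← mem_latticeOf, ← hI,
      mem_latticeOf, he]
  refine ⟨u, fun y => Matrix.toLin'.injective (LinearMap.ext fun w => ?_)⟩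
  simp only [hu, Matrix.toLin'_mul, LinearMap.comp_apply, Matrix.toLin'_toMatrix',
    Matrix.toLin'_apply]
  simp [t, he_mul, mul_left_comm x y, colMap_mul σ j y]

end Conjugacy

lemma fracIdealRel_iff {L : Type*} [Field L] {Γ : Subring L} {I I' : FractionalIdealOf L Γ} :
    FracIdealRel L Γ I I' ↔ ∃ x ≠ 0, ∀ y, y ∈ I'.1 ↔ x * y ∈ I.1 := by
  refine ⟨fun ⟨x, hx, h⟩ => ⟨x⁻¹, inv_ne_zero hx, fun y => ?_⟩,
    fun ⟨x, hx, h⟩ => ⟨x⁻¹, inv_ne_zero hx, fun y => ?_⟩⟩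
  · rw [h]
    exact ⟨fun ⟨z, hz, hyz⟩ => by rwa [hyz, inv_mul_cancel_left₀ hx],
      fun hy => ⟨_, hy, (mul_inv_cancel_left₀ hx y).symm⟩⟩
  · rw [h]
    exact ⟨fun hy => ⟨_, hy, (inv_mul_cancel_left₀ hx y).symm⟩,
      fun ⟨z, hz, hyz⟩ => by rwa [hyz, mul_inv_cancel_left₀ hx]⟩

lemma fracIdealRel_equivalence (L : Type*) [Field L] (Γ : Subring L) :
    Equivalence (FracIdealRel L Γ) where
  refl I := fracIdealRel_iff.2 ⟨1, one_ne_zero, fun y => by rw [one_mul]⟩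
  symm h := by
    obtain ⟨x, hx, h⟩ := fracIdealRel_iff.1 h
    exact fracIdealRel_iff.2 ⟨x⁻¹, inv_ne_zero hx, fun y => by rw [h, mul_inv_cancel_left₀ hx]⟩
  trans h h' := by
    obtain ⟨x, hx, h⟩ := fracIdealRel_iff.1 h
    obtain ⟨x', hx', h'⟩ := fracIdealRel_iff.1 h'
    exact fracIdealRel_iff.2 ⟨x * x', mul_ne_zero hx hx', fun y => by rw [h', h, mul_assoc]⟩

lemma conjRel_of_mul_eq {A B : Type*} [Ring A] [Ring B] {ρ ρ' : A →+* B} (u : Bˣ)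
    (h : ∀ a, ↑u * ρ' a = ρ a * ↑u) : ConjRel A B ρ ρ' :=
  ⟨u⁻¹, fun a => by rw [inv_inv, mul_assoc, ← h, Units.inv_mul_cancel_left]⟩

lemma AlgHom.apply_eq_mul_mul_of_span_eq_top {L A : Type*} [Field L] [CharZero L] [Ring A]
    [Algebra ℚ A] {σ σ' : L →ₐ[ℚ] A} {s : Set L} (hs : Submodule.span ℚ s = ⊤) (U V : A)
    (h : ∀ y ∈ s, σ' y = U * σ y * V) (y : L) : σ' y = U * σ y * V := by
  let conj : L →ₗ[ℚ] A := LinearMap.mulRight ℚ V ∘ₗ LinearMap.mulLeft ℚ U ∘ₗ σ.toLinearMap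
  exact LinearMap.congr_fun (LinearMap.ext_on hs (f := σ'.toLinearMap) (g := conj) h) y

section Compatible

variable {L K : Type*} [Field L] [NumberField L] [Field K] [NumberField K] {n : ℕ}
  {Γ : Subring L} {φ : K →+* L} {ρ ρ' : Γ →+* Matrix (Fin n) (Fin n) (𝓞 K)}

noncomputable def IsCompatible.algHom (h : IsCompatible L K n Γ φ ρ) :
    L →ₐ[ℚ] Matrix (Fin n) (Fin n) K :=
  h.choose

lemma IsCompatible.algHom_coe (h : IsCompatible L K n Γ φ ρ) (γ : Γ) :
    h.algHom γ = (ρ γ).map (algebraMap (𝓞 K) K) :=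
  h.choose_spec.1 γ

lemma IsCompatible.algHom_map (h : IsCompatible L K n Γ φ ρ) (k : K) :
    h.algHom (φ k) = scalar (Fin n) k :=
  h.choose_spec.2 k

noncomputable def IsCompatible.fracIdeal (h : IsCompatible L K n Γ φ ρ) (j : Fin n) :
    FractionalIdealOf L Γ :=
  latticeFracIdeal (𝓞 K) h.algHom j Γ fun γ => ⟨ρ γ, (h.algHom_coe γ).symm⟩

variable (h : IsCompatible L K n Γ φ ρ) (h' : IsCompatible L K n Γ φ ρ') (j : Fin n)

lemma IsCompatible.fracIdealRel_of_conjRel (hdim : Module.finrank ℚ L = n * Module.finrank ℚ K)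
    (hΓ : Submodule.span ℚ (Γ : Set L) = ⊤)
    (hρ : ConjRel Γ _ ρ ρ') : FracIdealRel L Γ (h.fracIdeal j) (h'.fracIdeal j) := by
  obtain ⟨u, hu⟩ := hρ
  have hconj : ∀ y, h'.algHom y = (u : Matrix (Fin n) (Fin n) (𝓞 K)).map (algebraMap _ K) *
      h.algHom y * (↑u⁻¹ : Matrix (Fin n) (Fin n) (𝓞 K)).map (algebraMap _ K) :=
    AlgHom.apply_eq_mul_mul_of_span_eq_top hΓ _ _ fun y hy => by
      lift y to Γ using hy
      rw [h.algHom_coe, h'.algHom_coe, hu, Matrix.map_mul, Matrix.map_mul]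
  exact fracIdealRel_iff.2 <| exists_mem_latticeOf_iff_of_eq_conj
    (colMap_bijective _ j (by simpa using hdim)).2 u hconj

lemma IsCompatible.conjRel_of_fracIdealRel (hdim : Module.finrank ℚ L = n * Module.finrank ℚ K)
    (hI : FracIdealRel L Γ (h.fracIdeal j) (h'.fracIdeal j)) : ConjRel Γ _ ρ ρ' := by
  obtain ⟨x, hx, hI⟩ := fracIdealRel_iff.1 hI
  have hbij (σ : L →ₐ[ℚ] Matrix (Fin n) (Fin n) K) : Function.Bijective (colMap σ j) :=
    colMap_bijective σ j (by simpa using hdim)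
  obtain ⟨u, hu⟩ := exists_conj_of_mem_latticeOf_iff RingOfIntegers.coe_injective h.algHom_map
    h'.algHom_map (hbij _) (hbij _) hx hI
  refine conjRel_of_mul_eq u fun γ => Matrix.map_injective RingOfIntegers.coe_injective ?_
  simpa only [Matrix.map_mul, h.algHom_coe, h'.algHom_coe] using hu γ

end Compatible

theorem compatible_gammaStructures_inject_into_idealClasses_general
    (L K : Type*) [Field L] [NumberField L] [Field K] [NumberField K] [Algebra K L]
    (Γ : Subring L)
    (hΓspan : Submodule.span ℚ (Γ : Set L) = ⊤)
    (n : ℕ) (hn : n = Module.finrank K L) (φ : K →+* L) :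
    ∃ f : Quot (fun ρ ρ' : {ρ : Γ →+* Matrix (Fin n) (Fin n) (𝓞 K) //
          IsCompatible L K n Γ φ ρ} => ConjRel Γ (Matrix (Fin n) (Fin n) (𝓞 K)) ρ.1 ρ'.1) →
        Quot (FracIdealRel L Γ),
      Function.Injective f := by
  have : FiniteDimensional K L := .right ℚ K L
  have hdim : Module.finrank ℚ L = n * Module.finrank ℚ K := by
    rw [hn, ← Module.finrank_mul_finrank ℚ K L, mul_comm]
  let j : Fin n := ⟨0, hn ▸ Module.finrank_pos⟩
  refine ⟨Quot.lift (fun ρ => Quot.mk _ (ρ.2.fracIdeal j)) fun ρ ρ' hρ =>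
    Quot.sound (ρ.2.fracIdealRel_of_conjRel ρ'.2 j hdim hΓspan hρ), ?_⟩
  rintro ⟨ρ⟩ ⟨ρ'⟩ hρ
  exact Quot.sound (ρ.2.conjRel_of_fracIdealRel ρ'.2 j hdim
    ((fracIdealRel_equivalence L Γ).eqvGen_iff.1 (Quot.eq.1 hρ)))

/-- Let `L` be a number field, `Γ` an order of `L`, `K ⊆ L` a subfield
with ring of integers `O_K`, `n = [L:K]`, `R = Mₙ(O_K)`, and fix a ring homomorphism
`φ : K → L`.  Then there is an injective map from the set of `φ`-compatible ring
homomorphisms `Γ → R` modulo conjugation by units of `R` into the set `C_Γ` of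
equivalence classes of fractional ideals of `Γ`. -/
theorem compatible_gammaStructures_inject_into_idealClasses
    (L K : Type*) [Field L] [NumberField L] [Field K] [NumberField K] [Algebra K L]
    (Γ : Subring L) (hΓfin : Module.Finite ℤ Γ)
    (hΓspan : Submodule.span ℚ (Γ : Set L) = ⊤)
    (n : ℕ) (hn : n = Module.finrank K L) (φ : K →+* L) :
    ∃ f : Quot (fun ρ ρ' : {ρ : Γ →+* Matrix (Fin n) (Fin n) (𝓞 K) //
          IsCompatible L K n Γ φ ρ} => ConjRel Γ (Matrix (Fin n) (Fin n) (𝓞 K)) ρ.1 ρ'.1) →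
        Quot (FracIdealRel L Γ),
      Function.Injective f :=
  compatible_gammaStructures_inject_into_idealClasses_general L K Γ hΓspan n hn φ
end

section
/- Let Ω be an associative unital ℚ-algebra, let R and R' be subrings of Ω with R' ⊆ R, let d ≥ 1 be an integer with d·R ⊆ R', let Γ be an order of a number field L, and let Γ' = ℤ[dΓ]. Then the number of Γ-structures on R is at most the number of Γ'-structures on R' (as an inequality of cardinalities). -/
open Cardinal

universe u

theorem ConjRel.equivalence (A B : Type*) [Ring A] [Ring B] : Equivalence (ConjRel A B) where
  refl _ := ⟨1, fun a => by simp⟩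
  symm := by
    rintro ρ ρ' ⟨u, hu⟩
    exact ⟨u⁻¹, fun a => by simp [hu a, mul_assoc]⟩
  trans := by
    rintro ρ₁ ρ₂ ρ₃ ⟨u, hu⟩ ⟨v, hv⟩
    exact ⟨v * u, fun a => by simp [hv a, hu a, mul_assoc]⟩

section ConjRel

variable {A A' B C : Type*} [Ring A] [Ring A'] [Ring B] [Ring C]

theorem ConjRel.comp_left (j : B →+* C) {ρ ρ' : A →+* B} (h : ConjRel A B ρ ρ') :
    ConjRel A C (j.comp ρ) (j.comp ρ') := by
  obtain ⟨u, hu⟩ := h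
  exact ⟨Units.map (j : B →* C) u, fun a => by simp [hu a]⟩

theorem ConjRel.of_comp {ι : A' →+* A} {d : ℕ} (hι : ∀ a, ∃ a', ι a' = d * a)
    (hd : IsLeftRegular (d : B)) {ρ ρ' : A →+* B}
    (h : ConjRel A' B (ρ.comp ι) (ρ'.comp ι)) : ConjRel A B ρ ρ' := by
  obtain ⟨u, hu⟩ := h
  refine ⟨u, fun a => hd ?_⟩
  obtain ⟨a', ha'⟩ := hι a
  have hconj := hu a'
  simp only [RingHom.comp_apply, ha', map_mul, map_natCast] at hconj
  simp only [hconj, ← mul_assoc, (Nat.cast_commute d (u : B)).eq]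

end ConjRel

theorem Cardinal.mk_quot_le_of_reflect {α β : Type u} {r : α → α → Prop}
    {s : β → β → Prop} (hs : Equivalence s) (f : α → β)
    (hf : ∀ a b, s (f a) (f b) → r a b) :
    #(Quot r) ≤ #(Quot s) := by
  refine mk_le_of_injective (f := fun c => Quot.mk s (f c.out)) fun c c' h => ?_
  rw [← Quot.out_eq c, ← Quot.out_eq c']
  exact Quot.sound (hf _ _ (hs.eqvGen_iff.mp (Quot.eqvGen_exact h)))

theorem isUnit_natCast_of_algebra (K : Type*) {Ω : Type*} [Field K] [CharZero K]
    [Ring Ω] [Algebra K Ω] {d : ℕ} (hd : d ≠ 0) : IsUnit (d : Ω) := by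
  simpa using (Ne.isUnit (Nat.cast_ne_zero.mpr hd : (d : K) ≠ 0)).map (algebraMap K Ω)

theorem Subring.isLeftRegular_natCast {Ω : Type*} [Ring Ω] (R : Subring Ω) {d : ℕ}
    (hd : IsLeftRegular (d : Ω)) : IsLeftRegular (d : R) := fun x y h =>
  Subtype.ext <| hd <| by simpa using congrArg Subtype.val h

namespace Subring

variable {L : Type*} [Ring L] (Γ : Subring L) (d : ℕ)

/-- The subring `ℤ[dΓ]` generated by `dΓ`. -/
abbrev closureNatCastMul : Subring L := closure ((fun γ : L => (d : L) * γ) '' Γ)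

theorem closureNatCastMul_le : Γ.closureNatCastMul d ≤ Γ :=
  closure_le.mpr <| by
    rintro _ ⟨γ, hγ, rfl⟩
    exact Γ.mul_mem (natCast_mem Γ d) hγ

theorem exists_inclusion_closureNatCastMul_eq (γ : Γ) :
    ∃ γ' : Γ.closureNatCastMul d, inclusion (Γ.closureNatCastMul_le d) γ' = d * γ :=
  ⟨⟨d * γ, subset_closure ⟨γ, γ.2, rfl⟩⟩, by ext; simp⟩

theorem closureNatCastMul_le_map_comap {B : Type*} [Ring B] (ψ : Γ →+* B) (S : Subring B)
    (h : ∀ γ, (d : B) * ψ γ ∈ S) : Γ.closureNatCastMul d ≤ (S.comap ψ).map Γ.subtype :=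
  closure_le.mpr <| by
    rintro _ ⟨γ, hγ, rfl⟩
    exact ⟨d * ⟨γ, hγ⟩, by simpa using h ⟨γ, hγ⟩, by simp⟩

variable {Ω : Type*} [Ring Ω] {R R' : Subring Ω} (hdR : ∀ x ∈ R, (d : Ω) * x ∈ R')

def restrictNatCastMul (ρ : Γ →+* R) : Γ.closureNatCastMul d →+* R' :=
  ((R.subtype.comp ρ).comp (inclusion (Γ.closureNatCastMul_le d))).codRestrict R' fun x => by
    obtain ⟨y, hy, hyx⟩ := Γ.closureNatCastMul_le_map_comap d (R.subtype.comp ρ) R'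
      (fun γ => by simpa using hdR _ (ρ γ).2) x.2
    rw [RingHom.comp_apply,
      show inclusion (Γ.closureNatCastMul_le d) x = y from Subtype.ext hyx.symm]
    exact hy

theorem inclusion_comp_restrictNatCastMul (hsub : R' ≤ R) (ρ : Γ →+* R) :
    (inclusion hsub).comp (Γ.restrictNatCastMul d hdR ρ) =
      ρ.comp (inclusion (Γ.closureNatCastMul_le d)) :=
  rfl

end Subring

theorem card_gammaStructures_le_of_subring_general
    (Ω : Type*) [Ring Ω] [Algebra ℚ Ω] (R R' : Subring Ω) (hsub : R' ≤ R)
    (L : Type*) [Field L]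
    (Γ : Subring L)
    (d : ℕ) (hd : 1 ≤ d) (hdR : ∀ x ∈ R, (d : Ω) * x ∈ R')
    (Γ' : Subring L) (hΓ' : Γ' = Subring.closure ((fun γ : L => (d : L) * γ) '' (Γ : Set L))) :
    Cardinal.mk (Quot (ConjRel Γ R)) ≤ Cardinal.mk (Quot (ConjRel Γ' R')) := by
  subst hΓ'
  refine mk_quot_le_of_reflect (ConjRel.equivalence _ _) (Γ.restrictNatCastMul d hdR)
    fun ρ ρ' h => ?_
  have hR := h.comp_left (Subring.inclusion hsub)
  rw [Subring.inclusion_comp_restrictNatCastMul, Subring.inclusion_comp_restrictNatCastMul] at hR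
  exact ConjRel.of_comp (Γ.exists_inclusion_closureNatCastMul_eq d)
    (R.isLeftRegular_natCast (isUnit_natCast_of_algebra ℚ (by omega)).isRegular.left) hR

/-- Let `Ω` be an associative unital `ℚ`-algebra, `R` and `R'` subrings
of `Ω` with `R' ⊆ R`, `d ≥ 1` an integer with `d·R ⊆ R'`, `Γ` an order of a number field
`L`, and `Γ' = ℤ[dΓ]`.  Then the number of `Γ`-structures on `R` is at most the number
of `Γ'`-structures on `R'` (as an inequality of cardinalities). -/
theorem card_gammaStructures_le_of_subring
    (Ω : Type*) [Ring Ω] [Algebra ℚ Ω] (R R' : Subring Ω) (hsub : R' ≤ R)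
    (L : Type*) [Field L] [NumberField L]
    (Γ : Subring L) (hΓfin : Module.Finite ℤ Γ)
    (hΓspan : Submodule.span ℚ (Γ : Set L) = ⊤)
    (d : ℕ) (hd : 1 ≤ d) (hdR : ∀ x ∈ R, (d : Ω) * x ∈ R')
    (Γ' : Subring L) (hΓ' : Γ' = Subring.closure ((fun γ : L => (d : L) * γ) '' (Γ : Set L))) :
    Cardinal.mk (Quot (ConjRel Γ R)) ≤ Cardinal.mk (Quot (ConjRel Γ' R')) :=
  card_gammaStructures_le_of_subring_general Ω R R' hsub L Γ d hd hdR Γ' hΓ'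
end

section
/- Let Ω be an associative unital ℚ-algebra, let R and R' be subrings of Ω with R' ⊆ R, and let d ≥ 1 be an integer with d·R ⊆ R'. Then every unit of R' is a unit of R, R'^× is a subgroup of R^×, and the number of cosets of R'^× in R^× is at most the cardinality of the additive quotient group R/dR. -/
/-!
Since `d` is central, `d·R` is a left ideal of `R`, and `d·R ⊆ R'` gives `1 + d·R ⊆ R'`.
If two units `u, v` of `R` are congruent modulo `d·R`, then `u⁻¹v - 1 = u⁻¹(v - u)` lies in
`d·R`, and so does `(u⁻¹v)⁻¹ - 1 = -(u⁻¹v)⁻¹(u⁻¹v - 1)`; hence `u⁻¹v` and its inverse lie in `R'`,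
i.e. `u` and `v` lie in the same coset of `R'^×`. So choosing a representative of each coset and
reducing it modulo `d·R` is injective.
-/

/-- The subgroup `{u ∈ R^× : u ∈ R' and u⁻¹ ∈ R'}` of the unit group `R^×` of a subring
`R` of `Ω`, identified with the unit group of the smaller subring `R'`. -/
def unitsOfSubring (Ω : Type*) [Ring Ω] (R' R : Subring Ω) : Subgroup (↥R)ˣ where
  carrier := {u | ((u : ↥R) : Ω) ∈ R' ∧ (((u⁻¹ : (↥R)ˣ) : ↥R) : Ω) ∈ R'}
  one_mem' := ⟨by simpa using R'.one_mem, by simpa using R'.one_mem⟩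
  mul_mem' := by
    intro a b ha hb
    refine ⟨?_, ?_⟩
    · simpa using R'.mul_mem ha.1 hb.1
    · simpa [mul_inv_rev] using R'.mul_mem hb.2 ha.2
  inv_mem' := by
    intro a ha
    exact ⟨ha.2, by simpa using ha.1⟩

/-- The additive subgroup `d·R` of (the subring) `R`. -/
def multiplesSubgroup (Ω : Type*) [Ring Ω] (R : Subring Ω) (d : ℕ) : AddSubgroup ↥R :=
  AddMonoidHom.range (d • AddMonoidHom.id ↥R)

universe u

theorem Subgroup.mk_quotient_le_of_eq_imp_inv_mul_mem {G X : Type u} [Group G] (H : Subgroup G)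
    (f : G → X) (hf : ∀ u v, f u = f v → u⁻¹ * v ∈ H) : Cardinal.mk (G ⧸ H) ≤ Cardinal.mk X := by
  refine Cardinal.mk_le_of_injective (f := fun a : G ⧸ H => f a.out) fun a b hab => ?_
  rw [← QuotientGroup.out_eq' a, ← QuotientGroup.out_eq' b, QuotientGroup.eq]
  exact hf _ _ hab

section multiplesSubgroup

variable {Ω : Type*} [Ring Ω] {R : Subring Ω} {d : ℕ}

theorem mem_multiplesSubgroup_iff {x : R} :
    x ∈ multiplesSubgroup Ω R d ↔ ∃ y : R, (d : R) * y = x := by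
  simp [multiplesSubgroup, nsmul_eq_mul]

theorem mul_mem_multiplesSubgroup (a : R) {x : R} (hx : x ∈ multiplesSubgroup Ω R d) :
    a * x ∈ multiplesSubgroup Ω R d := by
  obtain ⟨y, rfl⟩ := mem_multiplesSubgroup_iff.mp hx
  exact mem_multiplesSubgroup_iff.mpr ⟨a * y, (Nat.cast_commute d a).left_comm y⟩

variable {R' : Subring Ω} (hdR : ∀ x ∈ R, (d : Ω) * x ∈ R')
include hdR

theorem coe_mem_of_sub_one_mem_multiplesSubgroup {a : R} (ha : a - 1 ∈ multiplesSubgroup Ω R d) :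
    (a : Ω) ∈ R' := by
  obtain ⟨y, hy⟩ := mem_multiplesSubgroup_iff.mp ha
  have hcoe : (a : Ω) = 1 + (d : Ω) * y := by
    rw [← sub_eq_iff_eq_add']
    exact_mod_cast hy.symm
  exact hcoe ▸ R'.add_mem R'.one_mem (hdR y y.2)

theorem mem_unitsOfSubring_of_sub_one_mem (w : Rˣ) (hw : (w : R) - 1 ∈ multiplesSubgroup Ω R d) :
    w ∈ unitsOfSubring Ω R' R := by
  have hinv : ((w⁻¹ : Rˣ) : R) - 1 = -(((w⁻¹ : Rˣ) : R) * ((w : R) - 1)) := by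
    rw [mul_sub, Units.inv_mul, mul_one, neg_sub]
  refine ⟨coe_mem_of_sub_one_mem_multiplesSubgroup hdR hw,
    coe_mem_of_sub_one_mem_multiplesSubgroup hdR ?_⟩
  rw [hinv]
  exact neg_mem (mul_mem_multiplesSubgroup _ hw)

theorem inv_mul_mem_unitsOfSubring_of_sub_mem (u v : Rˣ)
    (huv : (v : R) - u ∈ multiplesSubgroup Ω R d) : u⁻¹ * v ∈ unitsOfSubring Ω R' R := by
  refine mem_unitsOfSubring_of_sub_one_mem hdR _ ?_
  rw [Units.val_mul, ← Units.inv_mul u, ← mul_sub]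
  exact mul_mem_multiplesSubgroup _ huv

end multiplesSubgroup

theorem units_index_le_card_quotient_general
    (Ω : Type*) [Ring Ω] (R R' : Subring Ω) (hsub : R' ≤ R)
    (d : ℕ) (hdR : ∀ x ∈ R, (d : Ω) * x ∈ R') :
    (∀ u : (↥R')ˣ, IsUnit (Subring.inclusion hsub (u : ↥R'))) ∧
    Cardinal.mk ((↥R)ˣ ⧸ unitsOfSubring Ω R' R) ≤
      Cardinal.mk (↥R ⧸ multiplesSubgroup Ω R d) := by
  refine ⟨fun u => (Units.map (Subring.inclusion hsub).toMonoidHom u).isUnit, ?_⟩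
  refine (unitsOfSubring Ω R' R).mk_quotient_le_of_eq_imp_inv_mul_mem
    (fun u => ((u : R) : R ⧸ multiplesSubgroup Ω R d)) fun u v huv => ?_
  exact inv_mul_mem_unitsOfSubring_of_sub_mem hdR u v
    (QuotientAddGroup.eq_iff_sub_mem.mp huv.symm)

/-- Let `Ω` be an associative unital `ℚ`-algebra, `R` and `R'` subrings
of `Ω` with `R' ⊆ R`, and `d ≥ 1` an integer with `d·R ⊆ R'`.  Then every unit of `R'`
is a unit of `R`; `R'^×` is (identified with) the subgroup
`{u ∈ R^× : u ∈ R' and u⁻¹ ∈ R'}` of `R^×`; and the number of cosets of `R'^×` in `R^×`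
is at most the cardinality of the additive quotient group `R/dR`. -/
theorem units_index_le_card_quotient
    (Ω : Type*) [Ring Ω] [Algebra ℚ Ω] (R R' : Subring Ω) (hsub : R' ≤ R)
    (d : ℕ) (hd : 1 ≤ d) (hdR : ∀ x ∈ R, (d : Ω) * x ∈ R') :
    (∀ u : (↥R')ˣ, IsUnit (Subring.inclusion hsub (u : ↥R'))) ∧
    Cardinal.mk ((↥R)ˣ ⧸ unitsOfSubring Ω R' R) ≤
      Cardinal.mk (↥R ⧸ multiplesSubgroup Ω R d) :=
  units_index_le_card_quotient_general Ω R R' hsub d hdR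
end

section
/- Let L be a number field of degree g = [L:ℚ] with ring of integers O_L, let Γ be an order of L with conductor f, let d ≥ 1 be an integer, and let Γ' = ℤ[dΓ] with conductor f'. Then d·f ⊆ f'; in other words, for every x ∈ O_L with x·O_L ⊆ Γ one has (d·x)·O_L ⊆ Γ'. Consequently N(f') ≤ d^g · N(f), i.e. |O_L/f'| ≤ d^g · |O_L/f|. -/
open NumberField

/-- The conductor of a subring `Γ` of `L`: the ideal `{x ∈ O_L : x·O_L ⊆ Γ}` of the
ring of integers `O_L` of `L`. -/
def orderConductor (L : Type*) [Field L] (Γ : Subring L) : Ideal (𝓞 L) where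
  carrier := {x : 𝓞 L | ∀ y : 𝓞 L, algebraMap (𝓞 L) L (x * y) ∈ Γ}
  add_mem' := by
    intro a b ha hb y
    have : (a + b) * y = a * y + b * y := add_mul a b y
    rw [this, map_add]
    exact Γ.add_mem (ha y) (hb y)
  zero_mem' := by
    intro y
    rw [zero_mul, map_zero]
    exact Γ.zero_mem
  smul_mem' := by
    intro c x hx y
    have : c • x * y = x * (c * y) := by rw [smul_eq_mul]; ring
    rw [this]
    exact hx (c * y)

/-
Multiplying by `d` sends `Γ` into `Γ' = ℤ[dΓ]`, so `x·O_L ⊆ Γ` gives `(d x)·O_L ⊆ Γ'`, i.e.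
`(d)·f ⊆ f'`. Hence `N(f')` divides `N((d)·f) = d^g · N(f)`, which gives the bound when `f ≠ 0`;
when `f = 0`, also `f' = 0` because `Γ' ⊆ Γ`, and both sides vanish.
-/

theorem Subring.closure_natCast_mul_image_le {R : Type*} [Ring R] (S : Subring R) (d : ℕ) :
    Subring.closure ((fun r : R => (d : R) * r) '' (S : Set R)) ≤ S :=
  Subring.closure_le.mpr <| by
    rintro _ ⟨r, hr, rfl⟩
    exact S.mul_mem (natCast_mem S d) hr

theorem orderConductor_mono (L : Type*) [Field L] {Γ Γ' : Subring L} (h : Γ' ≤ Γ) :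
    orderConductor L Γ' ≤ orderConductor L Γ :=
  fun _ hx y => h (hx y)

theorem natCast_mul_mem_orderConductor_closure (L : Type*) [Field L] (Γ : Subring L) (d : ℕ)
    {x : 𝓞 L} (hx : x ∈ orderConductor L Γ) :
    (d : 𝓞 L) * x ∈
      orderConductor L (Subring.closure ((fun γ : L => (d : L) * γ) '' (Γ : Set L))) := by
  intro y
  rw [mul_assoc, map_mul, map_natCast]
  exact Subring.subset_closure ⟨_, hx y, rfl⟩

theorem Ideal.absNorm_le_of_span_natCast_mul_le {S : Type*} [CommRing S] [IsDedekindDomain S]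
    [Module.Free ℤ S] [Module.Finite ℤ S] {n : ℕ} (hn : 1 ≤ n)
    {I J : Ideal S} (hJI : J ≤ I) (hnIJ : Ideal.span {(n : S)} * I ≤ J) :
    Ideal.absNorm J ≤ n ^ Module.finrank ℤ S * Ideal.absNorm I := by
  by_cases hI : I = ⊥
  · rw [hI, le_bot_iff] at hJI
    simp [hJI]
  have hdvd : Ideal.absNorm J ∣ n ^ Module.finrank ℤ S * Ideal.absNorm I := by
    rw [← Ideal.absNorm_span_natCast, ← map_mul]
    exact Ideal.absNorm_dvd_absNorm_of_le hnIJ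
  refine Nat.le_of_dvd (Nat.mul_pos (Nat.pow_pos hn) (Nat.pos_of_ne_zero ?_)) hdvd
  rwa [ne_eq, Ideal.absNorm_eq_zero_iff]

theorem conductor_of_subOrder_general
    (L : Type*) [Field L] [NumberField L]
    (g : ℕ) (hg : g = Module.finrank ℚ L)
    (Γ : Subring L)
    (d : ℕ) (hd : 1 ≤ d)
    (Γ' : Subring L) (hΓ' : Γ' = Subring.closure ((fun γ : L => (d : L) * γ) '' (Γ : Set L))) :
    (∀ x : 𝓞 L, x ∈ orderConductor L Γ → (d : 𝓞 L) * x ∈ orderConductor L Γ') ∧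
    Nat.card (𝓞 L ⧸ orderConductor L Γ') ≤ d ^ g * Nat.card (𝓞 L ⧸ orderConductor L Γ) := by
  subst hΓ' hg
  have hmul := fun x : 𝓞 L => natCast_mul_mem_orderConductor_closure L Γ d (x := x)
  refine ⟨hmul, ?_⟩
  have hle := Ideal.absNorm_le_of_span_natCast_mul_le hd
    (orderConductor_mono L (Γ.closure_natCast_mul_image_le d))
    (Ideal.span_singleton_mul_le_iff.mpr hmul)
  rwa [RingOfIntegers.rank, Ideal.absNorm_apply, Ideal.absNorm_apply, Submodule.cardQuot_apply,
    Submodule.cardQuot_apply] at hle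

/-- Let `L` be a number field of degree `g = [L:ℚ]` with ring of
integers `O_L`, let `Γ` be an order of `L` with conductor `f`, let `d ≥ 1` be an
integer, and let `Γ' = ℤ[dΓ]` with conductor `f'`.  Then `d·f ⊆ f'`: for every
`x ∈ O_L` with `x·O_L ⊆ Γ` one has `(d·x)·O_L ⊆ Γ'`.  Consequently
`N(f') ≤ d^g · N(f)`, i.e. `|O_L/f'| ≤ d^g · |O_L/f|`. -/
theorem conductor_of_subOrder
    (L : Type*) [Field L] [NumberField L]
    (g : ℕ) (hg : g = Module.finrank ℚ L)
    (Γ : Subring L) (hΓfin : Module.Finite ℤ Γ)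
    (hΓspan : Submodule.span ℚ (Γ : Set L) = ⊤)
    (d : ℕ) (hd : 1 ≤ d)
    (Γ' : Subring L) (hΓ' : Γ' = Subring.closure ((fun γ : L => (d : L) * γ) '' (Γ : Set L))) :
    (∀ x : 𝓞 L, x ∈ orderConductor L Γ → (d : 𝓞 L) * x ∈ orderConductor L Γ') ∧
    Nat.card (𝓞 L ⧸ orderConductor L Γ') ≤ d ^ g * Nat.card (𝓞 L ⧸ orderConductor L Γ) :=
  conductor_of_subOrder_general L g hg Γ d hd Γ' hΓ'
end
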